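/- Let n ≥ 2, let M = (Fin n → ℤ) ⋊ Equiv.Perm (Fin n) be the middle group Mid(B_n), let S be its full generating set {(±e_i, 1) : i} ∪ {r_{ij}(k) = (k(e_i − e_j), swap i j) : i ≠ j, k ∈ ℤ}, let ℓ be word length with respect to S, and let w = t_1 · r_{12} · r_{23} ⋯ r_{(n−1)n} be the special element, where t_i = (e_i, 1) and r_{ij} = r_{ij}(0). If u lies in the interval [1,w] = {u : ℓ(u) + ℓ(u⁻¹w) = ℓ(w)} and u w = w u, then u = 1 or u = w. -/

import Mathlib

open Multiplicative

/-- The automorphism of `Multiplicative (Fin n → A)` permuting coordinates by `π`. -/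
def permMulAut {n : ℕ} {A : Type*} [AddCommGroup A] (π : Equiv.Perm (Fin n)) :
    MulAut (Multiplicative (Fin n → A)) where
  toFun v := ofAdd fun i => toAdd v (π⁻¹ i)
  invFun v := ofAdd fun i => toAdd v (π i)
  left_inv v := by
    refine Multiplicative.toAdd.injective (funext fun i => ?_)
    simp
  right_inv v := by
    refine Multiplicative.toAdd.injective (funext fun i => ?_)
    simp
  map_mul' a b := rfl

/-- The coordinate-permutation action of `Equiv.Perm (Fin n)` on `Multiplicative (Fin n → A)`. -/
def permAction (n : ℕ) (A : Type*) [AddCommGroup A] :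
    Equiv.Perm (Fin n) →* MulAut (Multiplicative (Fin n → A)) where
  toFun := permMulAut
  map_one' := by
    refine MulEquiv.ext fun v => ?_
    refine Multiplicative.toAdd.injective (funext fun i => ?_)
    simp [permMulAut]
  map_mul' π σ := by
    refine MulEquiv.ext fun v => ?_
    refine Multiplicative.toAdd.injective (funext fun i => ?_)
    simp [permMulAut]

/-- The middle group `Mid(B_n) = (Fin n → ℤ) ⋊ Equiv.Perm (Fin n)`. -/
abbrev Mid (n : ℕ) := Multiplicative (Fin n → ℤ) ⋊[permAction n ℤ] Equiv.Perm (Fin n)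

/-- The full generating set of the middle group: the translations `(±e_i, 1)` and the
reflections `r_{ij}(k) = (k(e_i − e_j), swap i j)` for `i ≠ j` and `k ∈ ℤ`. -/
def midGens (n : ℕ) : Set (Mid n) :=
  {x | (∃ i : Fin n, x = SemidirectProduct.inl (ofAdd (Pi.single i (1 : ℤ))) ∨
          x = SemidirectProduct.inl (ofAdd (-Pi.single i (1 : ℤ)))) ∨
       (∃ i j : Fin n, ∃ k : ℤ, i ≠ j ∧
          x = ⟨ofAdd (k • (Pi.single i (1 : ℤ) - Pi.single j (1 : ℤ))), Equiv.swap i j⟩)}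

/-- Word length with respect to a generating set `S`. -/
noncomputable def wordLength {G : Type*} [Group G] (S : Set G) (g : G) : ℕ :=
  sInf {k | ∃ l : List G, l.length = k ∧ (∀ x ∈ l, x ∈ S) ∧ l.prod = g}

/-- The special element `w = t_1 r_{12} r_{23} ⋯ r_{(n−1)n}` of the middle group. -/
def midSpecialElt (m : ℕ) : Mid (m + 2) :=
  SemidirectProduct.inl (φ := permAction (m + 2) ℤ)
      (ofAdd (Pi.single (0 : Fin (m + 2)) (1 : ℤ))) *
    ((List.finRange (m + 1)).map
      (fun i => (SemidirectProduct.inr (Equiv.swap i.castSucc i.succ) : Mid (m + 2)))).prod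


/-!
The permutation part of an element `u` commuting with `w = (e₀, σ)`, `σ = finRotate n`, commutes
with the full cycle `σ`, so it is some `σ ^ j`; then `u * w ^ (-j)` is a translation commuting with
`w`, i.e. a `σ`-invariant, hence constant, vector, and the constant vectors are the powers of
`w ^ n = (1, …, 1)`. Thus `u = w ^ k`.

The weight `2 |∑ᵢ vᵢ| + |supp π|` of `(v, π)` is subadditive and at most `2` on generators, so it
is at most `2 ℓ`. For `k ≠ 0` the weight of `w ^ k = (_, σ ^ k)` is `2 |k| + |supp σ ^ k| ≥ n + 2`:
either `n ∣ k`, or `σ ^ k` moves every point. Hence for `k ∉ {0, 1}` we would get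
`2 ℓ(w ^ k) + 2 ℓ(w ^ (1 - k)) ≥ 2 n + 4 > 2 ℓ(w)`.
-/

open SemidirectProduct

theorem SemidirectProduct.commute_inl_iff {N G : Type*} [CommGroup N] [Group G]
    {φ : G →* MulAut N} (x : N) (g : N ⋊[φ] G) :
    Commute (inl x) g ↔ φ g.right x = x := by
  rw [Commute, SemiconjBy, SemidirectProduct.ext_iff]
  simp [mul_comm x, eq_comm]

theorem SemidirectProduct.eq_inl_left_of_right_eq_one {N G : Type*} [Group N] [Group G]
    {φ : G →* MulAut N} {g : N ⋊[φ] G} (h : g.right = 1) : g = inl g.left := by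
  ext <;> simp [h]

section FullCycle

variable {α : Type*} [DecidableEq α] [Fintype α] {σ : Equiv.Perm α}

theorem Equiv.Perm.IsCycle.apply_eq_of_comp_eq {β : Type*} (hσ : σ.IsCycle)
    (hσ_univ : σ.support = Finset.univ) {v : α → β} (hv : v ∘ σ = v) (x y : α) : v x = v y := by
  have hmoved (z : α) : σ z ≠ z := Equiv.Perm.mem_support.mp (hσ_univ ▸ Finset.mem_univ z)
  obtain ⟨k, rfl⟩ := hσ.exists_pow_eq (hmoved x) (hmoved y)
  induction k with
  | zero => rfl
  | succ k ih => rw [ih, pow_succ', Equiv.Perm.mul_apply]; exact (congrFun hv _).symm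

theorem Equiv.Perm.IsCycle.mem_zpowers_of_commute {τ : Equiv.Perm α} (hσ : σ.IsCycle)
    (hσ_univ : σ.support = Finset.univ) (h : Commute τ σ) : τ ∈ Subgroup.zpowers σ := by
  obtain ⟨hτ, hmem⟩ := hσ.commute_iff.mp h
  rwa [Equiv.Perm.ofSubtype_subtypePerm hτ (fun x _ => hσ_univ ▸ Finset.mem_univ x)] at hmem

end FullCycle

section WordLength

variable {G : Type*} [Group G] {S : Set G}

theorem wordLength_prod_le {l : List G} (hl : ∀ x ∈ l, x ∈ S) :
    wordLength S l.prod ≤ l.length :=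
  Nat.sInf_le ⟨l, rfl, hl, rfl⟩

theorem le_mul_wordLength (f : G → ℕ) {c : ℕ} (hf_one : f 1 = 0)
    (hf_mul : ∀ a b, f (a * b) ≤ f a + f b) (hfS : ∀ s ∈ S, f s ≤ c) {g : G}
    (hg : g ∈ Submonoid.closure S) : f g ≤ c * wordLength S g := by
  obtain ⟨l, hlS, hl⟩ := Submonoid.exists_list_of_mem_closure hg
  obtain ⟨l', hl', hl'S, rfl⟩ := Nat.sInf_mem
    (s := {k | ∃ l : List G, l.length = k ∧ (∀ x ∈ l, x ∈ S) ∧ l.prod = g})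
    ⟨l.length, l, rfl, hlS, hl⟩
  rw [wordLength, ← hl']
  clear hl' hl hlS l hg
  induction l' with
  | nil => simp [hf_one]
  | cons a t ih =>
    calc f (a * t.prod) ≤ f a + f t.prod := hf_mul a t.prod
      _ ≤ c + c * t.length :=
        add_le_add (hfS a (hl'S a List.mem_cons_self))
          (ih fun x hx => hl'S x (List.mem_cons_of_mem a hx))
      _ = c * (a :: t).length := by rw [List.length_cons]; ring

theorem Submonoid.zpow_mem_closure_of_inv_mem (hS : ∀ s ∈ S, s⁻¹ ∈ S) {g : G}
    (hg : g ∈ Submonoid.closure S) (k : ℤ) : g ^ k ∈ Submonoid.closure S := by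
  have hsymm : S ∪ S⁻¹ = S := Set.union_eq_left.mpr fun s hs => by simpa using hS _ hs
  rw [← hsymm, ← Subgroup.closure_toSubmonoid]
  exact Subgroup.zpow_mem _ (Submonoid.closure_le.mpr Subgroup.subset_closure hg) k

end WordLength

section Weight

variable {n : ℕ}

theorem toAdd_permAction_apply {A : Type*} [AddCommGroup A] (π : Equiv.Perm (Fin n))
    (v : Multiplicative (Fin n → A)) (i : Fin n) :
    toAdd (permAction n A π v) i = toAdd v (π⁻¹ i) :=
  rfl

def coordSum (n : ℕ) : Mid n →* Multiplicative ℤ where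
  toFun g := ofAdd (∑ i, toAdd g.left i)
  map_one' := by simp
  map_mul' a b := by
    rw [← ofAdd_add, mul_left, toAdd_mul]
    simp only [Pi.add_apply, Finset.sum_add_distrib, toAdd_permAction_apply]
    rw [Equiv.sum_comp a.right⁻¹ (toAdd b.left)]

theorem coordSum_apply (g : Mid n) : coordSum n g = ofAdd (∑ i, toAdd g.left i) :=
  rfl

def midWeight (g : Mid n) : ℕ :=
  2 * (toAdd (coordSum n g)).natAbs + g.right.support.card

theorem midWeight_one : midWeight (1 : Mid n) = 0 := by
  simp [midWeight]

theorem midWeight_mul_le (a b : Mid n) : midWeight (a * b) ≤ midWeight a + midWeight b := by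
  have hsum := Int.natAbs_add_le (toAdd (coordSum n a)) (toAdd (coordSum n b))
  have hsupp : (a.right * b.right).support.card ≤ a.right.support.card + b.right.support.card :=
    (Finset.card_le_card (Equiv.Perm.support_mul_le _ _)).trans (Finset.card_union_le _ _)
  rw [midWeight, map_mul, toAdd_mul, mul_right]
  unfold midWeight
  omega

theorem midWeight_le_two_of_mem_midGens {x : Mid n} (hx : x ∈ midGens n) : midWeight x ≤ 2 := by
  rcases hx with ⟨i, rfl | rfl⟩ | ⟨i, j, k, hij, rfl⟩
  · simp [midWeight, coordSum_apply]
  · simp [midWeight, coordSum_apply]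
  · simp [midWeight, coordSum_apply, Finset.sum_sub_distrib, ← Finset.mul_sum,
      Equiv.Perm.card_support_swap hij]

theorem inv_mem_midGens {x : Mid n} (hx : x ∈ midGens n) : x⁻¹ ∈ midGens n := by
  rcases hx with ⟨i, rfl | rfl⟩ | ⟨i, j, k, hij, rfl⟩
  · exact Or.inl ⟨i, Or.inr (by rw [← map_inv, ← ofAdd_neg])⟩
  · exact Or.inl ⟨i, Or.inl (by rw [← map_inv, ← ofAdd_neg, neg_neg])⟩
  · refine Or.inr ⟨i, j, k, hij, inv_eq_of_mul_eq_one_left ?_⟩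
    ext l
    · simp only [mul_left, toAdd_mul, Pi.add_apply, toAdd_permAction_apply, Equiv.swap_inv,
        Equiv.swap_apply_def]
      split_ifs <;> simp_all
    · simp [mul_right]

end Weight

section SpecialElt

open Equiv.Perm

variable {m : ℕ}

theorem List.formPerm_finRange (n : ℕ) : (List.finRange n).formPerm = finRotate n := by
  ext x
  have hx : (List.finRange n)[x.val]'(by simp) = x := by simp
  rw [← hx, List.formPerm_apply_getElem _ (List.nodup_finRange n)]
  simp only [List.getElem_finRange, List.length_finRange, Fin.cast_mk]
  rw [finRotate_apply, Fin.val_add, Fin.val_one', Nat.add_mod_mod]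

theorem list_prod_swap_castSucc_succ (m : ℕ) :
    ((List.finRange (m + 1)).map fun i => Equiv.swap i.castSucc i.succ).prod =
      finRotate (m + 2) := by
  rw [← List.formPerm_finRange, List.formPerm]
  congr 1
  apply List.ext_getElem <;> simp

theorem midSpecialElt_eq_mk :
    midSpecialElt m = ⟨ofAdd (Pi.single 0 1), finRotate (m + 2)⟩ := by
  have hswaps : ((List.finRange (m + 1)).map
      fun i => (inr (Equiv.swap i.castSucc i.succ) : Mid (m + 2))).prod =
      inr (finRotate (m + 2)) := by
    rw [← list_prod_swap_castSucc_succ, map_list_prod, List.map_map]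
    rfl
  rw [midSpecialElt, hswaps, mk_eq_inl_mul_inr]

theorem exists_midGens_word_midSpecialElt (m : ℕ) :
    ∃ l : List (Mid (m + 2)), l.length = m + 2 ∧ (∀ x ∈ l, x ∈ midGens (m + 2)) ∧
      l.prod = midSpecialElt m := by
  refine ⟨inl (ofAdd (Pi.single 0 1)) :: (List.finRange (m + 1)).map
    fun i => inr (Equiv.swap i.castSucc i.succ), by simp, ?_,
    by rw [List.prod_cons, midSpecialElt]⟩
  simp only [List.mem_cons, List.mem_map]
  rintro x (rfl | ⟨i, -, rfl⟩)
  · exact Or.inl ⟨0, Or.inl rfl⟩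
  · refine Or.inr ⟨i.castSucc, i.succ, 0, Fin.castSucc_lt_succ.ne, ?_⟩
    ext <;> simp

theorem wordLength_midSpecialElt_le (m : ℕ) :
    wordLength (midGens (m + 2)) (midSpecialElt m) ≤ m + 2 := by
  obtain ⟨l, hlen, hl, hprod⟩ := exists_midGens_word_midSpecialElt m
  exact hprod ▸ (wordLength_prod_le hl).trans hlen.le

theorem midSpecialElt_mem_closure (m : ℕ) :
    midSpecialElt m ∈ Submonoid.closure (midGens (m + 2)) := by
  obtain ⟨l, -, hl, hprod⟩ := exists_midGens_word_midSpecialElt m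
  exact hprod ▸ Submonoid.list_prod_mem _ fun x hx => Submonoid.subset_closure (hl x hx)

theorem right_midSpecialElt_zpow (k : ℤ) :
    (midSpecialElt m ^ k).right = finRotate (m + 2) ^ k := by
  rw [← rightHom_eq_right, map_zpow, rightHom_eq_right, midSpecialElt_eq_mk]

theorem toAdd_coordSum_midSpecialElt_zpow (k : ℤ) :
    toAdd (coordSum (m + 2) (midSpecialElt m ^ k)) = k := by
  rw [map_zpow, toAdd_zpow, midSpecialElt_eq_mk, coordSum_apply]
  simp

theorem isCycleOn_finRotate (m : ℕ) : (finRotate (m + 2)).IsCycleOn Set.univ := by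
  have hmoved : {x | finRotate (m + 2) x ≠ x} = Set.univ :=
    Set.eq_univ_of_forall fun x => mem_support.mp (support_finRotate ▸ Finset.mem_univ x)
  exact hmoved ▸ isCycle_finRotate.isCycleOn

theorem support_finRotate_zpow {k : ℤ} (hk : ¬ (m + 2 : ℤ) ∣ k) :
    (finRotate (m + 2) ^ k).support = Finset.univ := by
  refine Finset.eq_univ_of_forall fun x => mem_support.mpr fun hx => hk ?_
  have hcyc : (finRotate (m + 2)).IsCycleOn (Finset.univ : Finset (Fin (m + 2))) := by
    simpa using isCycleOn_finRotate m
  simpa using (hcyc.zpow_apply_eq (Finset.mem_univ x)).mp hx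

theorem add_four_le_midWeight_midSpecialElt_zpow {k : ℤ} (hk : k ≠ 0) :
    m + 4 ≤ midWeight (midSpecialElt m ^ k) := by
  rw [midWeight, toAdd_coordSum_midSpecialElt_zpow, right_midSpecialElt_zpow]
  by_cases hdvd : (m + 2 : ℤ) ∣ k
  · have := Int.natAbs_le_of_dvd_ne_zero hdvd hk
    omega
  · rw [support_finRotate_zpow hdvd, Finset.card_univ, Fintype.card_fin]
    omega

theorem add_four_le_two_mul_wordLength_midSpecialElt_zpow {k : ℤ} (hk : k ≠ 0) :
    m + 4 ≤ 2 * wordLength (midGens (m + 2)) (midSpecialElt m ^ k) :=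
  (add_four_le_midWeight_midSpecialElt_zpow hk).trans <|
    le_mul_wordLength midWeight midWeight_one midWeight_mul_le
      (fun _ => midWeight_le_two_of_mem_midGens)
      (Submonoid.zpow_mem_closure_of_inv_mem (fun _ => inv_mem_midGens)
        (midSpecialElt_mem_closure m) k)

end SpecialElt

section Centralizer

open Equiv.Perm

variable {m : ℕ}

theorem exists_eq_const_of_commute_inl_midSpecialElt {x : Multiplicative (Fin (m + 2) → ℤ)}
    (h : Commute (inl x) (midSpecialElt m)) : ∃ c : ℤ, x = ofAdd fun _ => c := by
  rw [commute_inl_iff, midSpecialElt_eq_mk] at h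
  have hv : toAdd x ∘ ⇑(finRotate (m + 2))⁻¹ = toAdd x :=
    funext fun i => congrFun (congrArg toAdd h) i
  exact ⟨toAdd x 0, funext fun i => isCycle_finRotate.inv.apply_eq_of_comp_eq
    (by rw [support_inv, support_finRotate]) hv i 0⟩

theorem midSpecialElt_pow_card :
    midSpecialElt m ^ (m + 2) = inl (ofAdd (1 : Fin (m + 2) → ℤ)) := by
  have hright : (midSpecialElt m ^ (m + 2)).right = 1 := by
    have hord := pow_orderOf_eq_one (finRotate (m + 2))
    rw [isCycle_finRotate.orderOf, support_finRotate, Finset.card_univ, Fintype.card_fin] at hord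
    rw [← zpow_natCast, right_midSpecialElt_zpow, zpow_natCast, hord]
  have hinl := eq_inl_left_of_right_eq_one hright
  obtain ⟨c, hc⟩ := exists_eq_const_of_commute_inl_midSpecialElt
    (hinl ▸ (Commute.refl (midSpecialElt m)).pow_left (m + 2))
  have hsum := toAdd_coordSum_midSpecialElt_zpow (m := m) (m + 2 : ℕ)
  rw [zpow_natCast, hinl, hc, coordSum_apply] at hsum
  have hc1 : c = 1 := by
    simp only [left_inl, toAdd_ofAdd, Finset.sum_const, Finset.card_univ, Fintype.card_fin,
      nsmul_eq_mul] at hsum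
    exact Int.eq_one_of_mul_eq_self_right (by positivity) hsum
  rw [hinl, hc, hc1]
  rfl

theorem exists_eq_zpow_of_commute_midSpecialElt {u : Mid (m + 2)}
    (h : Commute u (midSpecialElt m)) : ∃ k : ℤ, u = midSpecialElt m ^ k := by
  obtain ⟨j, hj⟩ := isCycle_finRotate.mem_zpowers_of_commute support_finRotate
    (by simpa [midSpecialElt_eq_mk] using h.map (rightHom : Mid (m + 2) →* _))
  set t := u * midSpecialElt m ^ (-j) with ht_def
  have ht : t = inl t.left :=
    eq_inl_left_of_right_eq_one (by simp [t, mul_right, right_midSpecialElt_zpow, ← hj])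
  have htw : Commute t (midSpecialElt m) := h.mul_left ((Commute.refl _).zpow_left (-j))
  rw [ht] at htw
  obtain ⟨c, hc⟩ := exists_eq_const_of_commute_inl_midSpecialElt htw
  have hconst : (inl (ofAdd fun _ => c) : Mid (m + 2)) =
      midSpecialElt m ^ (((m + 2 : ℕ) : ℤ) * c) := by
    rw [zpow_mul, zpow_natCast, midSpecialElt_pow_card, ← map_zpow, ← ofAdd_zsmul]
    congr
    funext i
    simp
  refine ⟨((m + 2 : ℕ) : ℤ) * c + j, ?_⟩
  rw [zpow_add, ← hconst, ← hc, ← ht, ht_def, zpow_neg, inv_mul_cancel_right]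

end Centralizer

/-- In the interval `[1, w]` of the middle group `Mid(B_n)` (`n = m + 2 ≥ 2`) with respect to
its full generating set, the only elements commuting with the special element `w` are `1`
and `w`. -/
theorem mid_commuting_with_w (m : ℕ) (u : Mid (m + 2))
    (hu : wordLength (midGens (m + 2)) u +
        wordLength (midGens (m + 2)) (u⁻¹ * midSpecialElt m) =
        wordLength (midGens (m + 2)) (midSpecialElt m))
    (hcomm : u * midSpecialElt m = midSpecialElt m * u) :
    u = 1 ∨ u = midSpecialElt m := by
  obtain ⟨k, rfl⟩ := exists_eq_zpow_of_commute_midSpecialElt hcomm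
  rw [← zpow_neg, ← zpow_add_one] at hu
  by_contra! hk
  have hk0 : k ≠ 0 := by rintro rfl; exact hk.1 (zpow_zero _)
  have hk1 : -k + 1 ≠ 0 := fun h => hk.2 (by rw [show k = 1 by omega, zpow_one])
  have hwk := add_four_le_two_mul_wordLength_midSpecialElt_zpow (m := m) hk0
  have hwk' := add_four_le_two_mul_wordLength_midSpecialElt_zpow (m := m) hk1
  have hw := wordLength_midSpecialElt_le m
  omega
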